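/- Certificate decrease for dual-averaged policy iteration: let (π_k, Q̄_k) be a DPI sequence with stepsizes β_0 = 1 and β_k ∈ (0,1] for k ≥ 1. Then for every k ≥ 1, ‖Q* − H^{π_k}(Q*)‖∞ ≤ (2γ/(1−γ)) · ∏_{i=1}^{k−1} (1 − (1−γ)β_i) · ‖Q* − H^{π_0}(Q*)‖∞. -/

import Mathlib

/-!
After the first step the averaged iterate `Q̄ₖ` is a subsolution of the optimality operator,
`Q̄ₖ ≤ H Q̄ₖ`. As `πₖ` is greedy for `Q̄ₖ`, the comparison principle for `H^{πₖ}` gives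
`Q̄ₖ ≤ Q^{πₖ} ≤ Q*`, and then `Q* - Q^{πₖ} ≤ γ ‖Q* - Q̄ₖ‖∞` (policy improvement). Hence every
averaging step contracts `‖Q* - Q̄ₖ‖∞` by `1 - (1 - γ) βₖ`, the certificate of the greedy
policy `πₖ` is at most `2γ ‖Q* - Q̄ₖ‖∞`, and `Q̄₁ = Q^{π₀}` starts the recursion with
`(1 - γ) ‖Q* - Q^{π₀}‖∞ ≤ ‖Q* - H^{π₀} Q*‖∞`.
-/

open Finset

noncomputable section

/-- A finite discounted MDP: transition kernel `p`, reward `R` in `[0,1]`,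
discount factor `γ ∈ (0,1)`. -/
structure MDP (S A : Type*) [Fintype S] [Fintype A] where
  p : S → A → S → ℝ
  R : S → A → ℝ
  γ : ℝ
  hp : ∀ s a, p s a ∈ stdSimplex ℝ S
  hR : ∀ s a, R s a ∈ Set.Icc (0 : ℝ) 1
  hγ : γ ∈ Set.Ioo (0 : ℝ) 1

variable {S A : Type*} [Fintype S] [Fintype A] [Nonempty S] [Nonempty A]

/-- The Bellman operator `H^π` of a policy `pol`. -/
def bellmanPol (M : MDP S A) (pol : S → A → ℝ) (Q : S → A → ℝ) : S → A → ℝ :=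
  fun s a => M.R s a + M.γ * ∑ s', M.p s a s' * ∑ a', pol s' a' * Q s' a'

/-- The Bellman optimality operator `H`. -/
def bellmanOpt (M : MDP S A) (Q : S → A → ℝ) : S → A → ℝ :=
  fun s a => M.R s a + M.γ * ∑ s', M.p s a s' * (⨆ a', Q s' a')

/-- The sup-norm of a vector in `ℝ^{S×A}`. -/
def supNormQ (Q : S → A → ℝ) : ℝ := ⨆ x : S × A, |Q x.1 x.2|

/-- The sup-norm of a vector in `ℝ^S`. -/
def supNormV (V : S → ℝ) : ℝ := ⨆ s : S, |V s|

/-- The value function `V^π` of a policy `pol` with `Q`-function `Qpol`. -/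
def valueOf (pol : S → A → ℝ) (Qpol : S → A → ℝ) : S → ℝ := fun s => ∑ a, pol s a * Qpol s a

/-- The optimal value function `V*` derived from `Q*`. -/
def Vstar (Qstar : S → A → ℝ) : S → ℝ := fun s => ⨆ a, Qstar s a

set_option linter.unusedSectionVars false

lemma sum_mul_le_of_mem_stdSimplex {ι : Type*} [Fintype ι] {w x : ι → ℝ}
    (hw : w ∈ stdSimplex ℝ ι) {c : ℝ} (hx : ∀ i, x i ≤ c) : ∑ i, w i * x i ≤ c :=
  calc ∑ i, w i * x i ≤ ∑ i, w i * c :=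
        sum_le_sum fun i _ => mul_le_mul_of_nonneg_left (hx i) (hw.1 i)
    _ = c := by rw [← sum_mul, hw.2, one_mul]

lemma sum_mul_sub_sum_mul_le_of_mem_stdSimplex {ι : Type*} [Fintype ι] {w x y : ι → ℝ}
    (hw : w ∈ stdSimplex ℝ ι) {c : ℝ} (h : ∀ i, x i - y i ≤ c) :
    ∑ i, w i * x i - ∑ i, w i * y i ≤ c := by
  rw [← sum_sub_distrib]
  simpa only [mul_sub] using sum_mul_le_of_mem_stdSimplex hw h

lemma ciSup_sub_ciSup_le {ι : Type*} [Finite ι] [Nonempty ι] {f g : ι → ℝ} {c : ℝ}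
    (h : ∀ i, f i - g i ≤ c) : (⨆ i, f i) - (⨆ i, g i) ≤ c := by
  rw [sub_le_iff_le_add]
  exact ciSup_le fun i => by linarith [h i, le_ciSup (Set.finite_range g).bddAbove i]

lemma nonpos_of_le_mul_of_forall_le {ι : Type*} [Finite ι] {γ : ℝ} (hγ : γ < 1) {D : ι → ℝ}
    (h : ∀ c, (∀ i, D i ≤ c) → ∀ i, D i ≤ γ * c) (i : ι) : D i ≤ 0 := by
  have : Nonempty ι := ⟨i⟩
  obtain ⟨j, hj⟩ := Finite.exists_max D
  have hjγ := h (D j) hj j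
  nlinarith [hj i]

lemma prod_Icc_mul_le_of_le_mul {u r : ℕ → ℝ} (hr : ∀ n, 0 ≤ r (n + 1))
    (hu : ∀ n, u (n + 2) ≤ r (n + 1) * u (n + 1)) (n : ℕ) :
    u (n + 1) ≤ (∏ i ∈ Icc 1 n, r i) * u 1 := by
  induction n with
  | zero => simp
  | succ n ih =>
    rw [prod_Icc_succ_top (by omega)]
    calc u (n + 2) ≤ r (n + 1) * u (n + 1) := hu n
      _ ≤ r (n + 1) * ((∏ i ∈ Icc 1 n, r i) * u 1) := mul_le_mul_of_nonneg_left ih (hr n)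
      _ = _ := by ring

section SupNorm

variable {Q Q' : S → A → ℝ}

lemma abs_le_supNormQ (Q : S → A → ℝ) (s : S) (a : A) : |Q s a| ≤ supNormQ Q :=
  le_ciSup (f := fun x : S × A => |Q x.1 x.2|) (Set.finite_range _).bddAbove (s, a)

lemma supNormQ_le {c : ℝ} (h : ∀ s a, |Q s a| ≤ c) : supNormQ Q ≤ c :=
  ciSup_le fun x => h x.1 x.2

lemma sub_le_supNormQ_sub (Q Q' : S → A → ℝ) (s : S) (a : A) :
    Q s a - Q' s a ≤ supNormQ (Q - Q') :=
  (abs_le.mp (abs_le_supNormQ (Q - Q') s a)).2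

lemma sub_le_supNormQ_sub_rev (Q Q' : S → A → ℝ) (s : S) (a : A) :
    Q' s a - Q s a ≤ supNormQ (Q - Q') := by
  have := (abs_le.mp (abs_le_supNormQ (Q - Q') s a)).1
  rw [Pi.sub_apply, Pi.sub_apply] at this
  linarith

lemma supNormQ_sub_le_of_le {c : ℝ} (hle : Q' ≤ Q) (h : ∀ s a, Q s a - Q' s a ≤ c) :
    supNormQ (Q - Q') ≤ c :=
  supNormQ_le fun s a => (abs_of_nonneg (sub_nonneg.mpr (hle s a))).trans_le (h s a)

end SupNorm

section Bellman

variable (M : MDP S A) {pol : S → A → ℝ} {Q Q' : S → A → ℝ}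

lemma bellmanPol_sub_le (hpol : ∀ s, pol s ∈ stdSimplex ℝ A) {c : ℝ}
    (h : ∀ s a, Q s a - Q' s a ≤ c) (s : S) (a : A) :
    bellmanPol M pol Q s a - bellmanPol M pol Q' s a ≤ M.γ * c := by
  have := sum_mul_sub_sum_mul_le_of_mem_stdSimplex (M.hp s a) fun s' =>
    sum_mul_sub_sum_mul_le_of_mem_stdSimplex (hpol s') (h s')
  simp only [bellmanPol]
  nlinarith [M.hγ.1]

lemma bellmanOpt_sub_le {c : ℝ} (h : ∀ s a, Q s a - Q' s a ≤ c) (s : S) (a : A) :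
    bellmanOpt M Q s a - bellmanOpt M Q' s a ≤ M.γ * c := by
  have := sum_mul_sub_sum_mul_le_of_mem_stdSimplex (M.hp s a) fun s' =>
    ciSup_sub_ciSup_le (h s')
  simp only [bellmanOpt]
  nlinarith [M.hγ.1]

lemma bellmanPol_le_bellmanOpt (hpol : ∀ s, pol s ∈ stdSimplex ℝ A) (Q : S → A → ℝ) :
    bellmanPol M pol Q ≤ bellmanOpt M Q := by
  intro s a
  have hV s' : ∑ a', pol s' a' * Q s' a' ≤ ⨆ a', Q s' a' :=
    sum_mul_le_of_mem_stdSimplex (hpol s') (le_ciSup (Set.finite_range _).bddAbove)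
  have := sum_le_sum fun s' (_ : s' ∈ univ) => mul_le_mul_of_nonneg_left (hV s') ((M.hp s a).1 s')
  simp only [bellmanPol, bellmanOpt]
  nlinarith [M.hγ.1]

lemma bellmanPol_one_sub_smul_add_smul (t : ℝ) :
    bellmanPol M pol ((1 - t) • Q + t • Q')
      = (1 - t) • bellmanPol M pol Q + t • bellmanPol M pol Q' := by
  ext s a
  simp only [bellmanPol, Pi.add_apply, Pi.smul_apply, smul_eq_mul, mul_add, sum_add_distrib,
    mul_left_comm _ (1 - t), mul_left_comm _ t, ← mul_sum]
  ring

lemma le_of_le_bellmanPol_of_bellmanPol_le (hpol : ∀ s, pol s ∈ stdSimplex ℝ A)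
    (hQ : Q ≤ bellmanPol M pol Q) (hQ' : bellmanPol M pol Q' ≤ Q') : Q ≤ Q' := by
  intro s a
  refine sub_nonpos.mp <| nonpos_of_le_mul_of_forall_le M.hγ.2
    (D := fun x : S × A => Q x.1 x.2 - Q' x.1 x.2) (fun c hc x => ?_) (s, a)
  have := bellmanPol_sub_le M hpol (fun s a => hc (s, a)) x.1 x.2
  linarith [hQ x.1 x.2, hQ' x.1 x.2]

end Bellman

section Optimal

variable (M : MDP S A) {pol Q Qp Qstar : S → A → ℝ}

lemma fixedPoint_bellmanPol_le (hpol : ∀ s, pol s ∈ stdSimplex ℝ A)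
    (hQp : bellmanPol M pol Qp = Qp) (hQstar : bellmanOpt M Qstar = Qstar) : Qp ≤ Qstar :=
  le_of_le_bellmanPol_of_bellmanPol_le M hpol hQp.ge
    ((bellmanPol_le_bellmanOpt M hpol Qstar).trans hQstar.le)

lemma one_sub_mul_supNormQ_sub_fixedPoint_le (hpol : ∀ s, pol s ∈ stdSimplex ℝ A)
    (hQp : bellmanPol M pol Qp = Qp) (hQstar : bellmanOpt M Qstar = Qstar) :
    (1 - M.γ) * supNormQ (Qstar - Qp) ≤ supNormQ (Qstar - bellmanPol M pol Qstar) := by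
  have hb : supNormQ (Qstar - Qp)
      ≤ supNormQ (Qstar - bellmanPol M pol Qstar) + M.γ * supNormQ (Qstar - Qp) := by
    refine supNormQ_sub_le_of_le (fixedPoint_bellmanPol_le M hpol hQp hQstar) fun s a => ?_
    have h1 := bellmanPol_sub_le M hpol (sub_le_supNormQ_sub Qstar Qp) s a
    have h2 := sub_le_supNormQ_sub Qstar (bellmanPol M pol Qstar) s a
    rw [hQp] at h1
    linarith
  linarith

lemma le_bellmanOpt_one_sub_smul_add_smul (hpol : ∀ s, pol s ∈ stdSimplex ℝ A)
    (hQp : bellmanPol M pol Qp = Qp) (hQ : Q ≤ bellmanOpt M Q)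
    (hgreedy : bellmanPol M pol Q = bellmanOpt M Q) {t : ℝ} (ht1 : t ≤ 1) :
    (1 - t) • Q + t • Qp ≤ bellmanOpt M ((1 - t) • Q + t • Qp) :=
  calc (1 - t) • Q + t • Qp ≤ (1 - t) • bellmanPol M pol Q + t • bellmanPol M pol Qp := by
        rw [hgreedy, hQp]; gcongr
    _ = bellmanPol M pol ((1 - t) • Q + t • Qp) := (bellmanPol_one_sub_smul_add_smul M t).symm
    _ ≤ _ := bellmanPol_le_bellmanOpt M hpol _

lemma sub_fixedPoint_le_of_greedy (hpol : ∀ s, pol s ∈ stdSimplex ℝ A)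
    (hQp : bellmanPol M pol Qp = Qp) (hQstar : bellmanOpt M Qstar = Qstar)
    (hgreedy : bellmanPol M pol Q = bellmanOpt M Q) (hle : Q ≤ Qp) (s : S) (a : A) :
    Qstar s a - Qp s a ≤ M.γ * supNormQ (Qstar - Q) := by
  have h1 := bellmanOpt_sub_le M (sub_le_supNormQ_sub Qstar Q) s a
  have h2 := bellmanPol_sub_le M hpol (c := 0) (fun s a => sub_nonpos.mpr (hle s a)) s a
  rw [hgreedy, hQp] at h2
  rw [hQstar] at h1
  linarith

lemma supNormQ_sub_one_sub_smul_add_smul_le (hpol : ∀ s, pol s ∈ stdSimplex ℝ A)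
    (hQp : bellmanPol M pol Qp = Qp) (hQstar : bellmanOpt M Qstar = Qstar)
    (hgreedy : bellmanPol M pol Q = bellmanOpt M Q) (hle : Q ≤ Qp) {t : ℝ} (ht0 : 0 ≤ t)
    (ht1 : t ≤ 1) :
    supNormQ (Qstar - ((1 - t) • Q + t • Qp)) ≤ (1 - (1 - M.γ) * t) * supNormQ (Qstar - Q) := by
  have hQpstar := fixedPoint_bellmanPol_le M hpol hQp hQstar
  refine supNormQ_sub_le_of_le (fun s a => ?_) fun s a => ?_ <;>
    simp only [Pi.add_apply, Pi.smul_apply, smul_eq_mul]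
  · nlinarith [hle s a, hQpstar s a]
  · have h1 := sub_le_supNormQ_sub Qstar Q s a
    have h2 := sub_fixedPoint_le_of_greedy M hpol hQp hQstar hgreedy hle s a
    calc Qstar s a - ((1 - t) * Q s a + t * Qp s a)
        = (1 - t) * (Qstar s a - Q s a) + t * (Qstar s a - Qp s a) := by ring
      _ ≤ (1 - t) * supNormQ (Qstar - Q) + t * (M.γ * supNormQ (Qstar - Q)) := by
        gcongr
      _ = _ := by ring

lemma supNormQ_sub_bellmanPol_le (hpol : ∀ s, pol s ∈ stdSimplex ℝ A)
    (hQstar : bellmanOpt M Qstar = Qstar) (hgreedy : bellmanPol M pol Q = bellmanOpt M Q) :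
    supNormQ (Qstar - bellmanPol M pol Qstar) ≤ 2 * M.γ * supNormQ (Qstar - Q) := by
  refine supNormQ_sub_le_of_le ((bellmanPol_le_bellmanOpt M hpol Qstar).trans hQstar.le)
    fun s a => ?_
  have h1 := bellmanOpt_sub_le M (sub_le_supNormQ_sub Qstar Q) s a
  have h2 := bellmanPol_sub_le M hpol (Q := Q) (Q' := Qstar)
    (sub_le_supNormQ_sub_rev Qstar Q) s a
  rw [hQstar, ← hgreedy] at h1
  linarith

end Optimal

lemma one_sub_one_sub_discount_mul_nonneg (M : MDP S A) {t : ℝ} (ht0 : 0 ≤ t) (ht1 : t ≤ 1) :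
    0 ≤ 1 - (1 - M.γ) * t :=
  sub_nonneg.mpr (mul_le_one₀ (by linarith [M.hγ.1]) ht0 ht1)

lemma dpi_Qbar_le_Qpi (M : MDP S A) {β : ℕ → ℝ} (hβ1 : ∀ k ≥ 1, β k ≤ 1)
    {pol Qpi Qbar : ℕ → S → A → ℝ} (hpol : ∀ k s, pol k s ∈ stdSimplex ℝ A)
    (hQpi : ∀ k, bellmanPol M (pol k) (Qpi k) = Qpi k) (hQbar_one : Qbar 1 = Qpi 0)
    (hQbarSucc : ∀ k, Qbar (k + 1) = (1 - β k) • Qbar k + β k • Qpi k)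
    (hgreedy : ∀ k, bellmanPol M (pol (k + 1)) (Qbar (k + 1)) = bellmanOpt M (Qbar (k + 1)))
    (n : ℕ) : Qbar (n + 1) ≤ Qpi (n + 1) := by
  have hsub (n : ℕ) : Qbar (n + 1) ≤ bellmanOpt M (Qbar (n + 1)) := by
    induction n with
    | zero => exact hQbar_one ▸ (hQpi 0).ge.trans (bellmanPol_le_bellmanOpt M (hpol 0) _)
    | succ n ih =>
      rw [hQbarSucc (n + 1)]
      exact le_bellmanOpt_one_sub_smul_add_smul M (hpol _) (hQpi _) ih (hgreedy n)
        (hβ1 (n + 1) (by omega))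
  exact le_of_le_bellmanPol_of_bellmanPol_le M (hpol _) ((hgreedy n).symm ▸ hsub n) (hQpi _).le

lemma dpi_supNormQ_sub_Qbar_le (M : MDP S A) {β : ℕ → ℝ} (hβ : ∀ k ≥ 1, β k ∈ Set.Ioc (0 : ℝ) 1)
    {pol Qpi Qbar : ℕ → S → A → ℝ} (hpol : ∀ k s, pol k s ∈ stdSimplex ℝ A)
    (hQpi : ∀ k, bellmanPol M (pol k) (Qpi k) = Qpi k) (hQbar_one : Qbar 1 = Qpi 0)
    (hQbarSucc : ∀ k, Qbar (k + 1) = (1 - β k) • Qbar k + β k • Qpi k)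
    (hgreedy : ∀ k, bellmanPol M (pol (k + 1)) (Qbar (k + 1)) = bellmanOpt M (Qbar (k + 1)))
    {Qstar : S → A → ℝ} (hQstar : bellmanOpt M Qstar = Qstar) (n : ℕ) :
    supNormQ (Qstar - Qbar (n + 1))
      ≤ (∏ i ∈ Icc 1 n, (1 - (1 - M.γ) * β i)) * supNormQ (Qstar - Qbar 1) := by
  refine prod_Icc_mul_le_of_le_mul (u := fun n => supNormQ (Qstar - Qbar n))
    (fun n => one_sub_one_sub_discount_mul_nonneg M (hβ (n + 1) (by omega)).1.le
      (hβ (n + 1) (by omega)).2) (fun n => ?_) n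
  obtain ⟨hβpos, hβle⟩ := hβ (n + 1) (by omega)
  rw [hQbarSucc (n + 1)]
  exact supNormQ_sub_one_sub_smul_add_smul_le M (hpol _) (hQpi _) hQstar (hgreedy n)
    (dpi_Qbar_le_Qpi M (fun k hk => (hβ k hk).2) hpol hQpi hQbar_one hQbarSucc hgreedy n)
    hβpos.le hβle

/-- **Certificate decrease for dual-averaged policy iteration** (Lemma 6). -/
theorem dpi_certificate_decrease
    (M : MDP S A)
    (β : ℕ → ℝ) (hβ0 : β 0 = 1) (hβ : ∀ k ≥ 1, β k ∈ Set.Ioc (0 : ℝ) 1)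
    (pol : ℕ → S → A → ℝ) (hpol : ∀ k s, pol k s ∈ stdSimplex ℝ A)
    (Qpi : ℕ → S → A → ℝ)
    (hQpi : ∀ k, bellmanPol M (pol k) (Qpi k) = Qpi k)
    (Qbar : ℕ → S → A → ℝ) (hQbar0 : Qbar 0 = 0)
    (hQbarSucc : ∀ k, Qbar (k + 1) = (1 - β k) • Qbar k + β k • Qpi k)
    (hgreedy : ∀ k, bellmanPol M (pol (k + 1)) (Qbar (k + 1)) = bellmanOpt M (Qbar (k + 1)))
    (Qstar : S → A → ℝ) (hQstar : bellmanOpt M Qstar = Qstar) :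
    ∀ k ≥ 1,
      supNormQ (Qstar - bellmanPol M (pol k) Qstar)
        ≤ (2 * M.γ / (1 - M.γ)) * (∏ i ∈ Finset.Icc 1 (k - 1), (1 - (1 - M.γ) * β i))
          * supNormQ (Qstar - bellmanPol M (pol 0) Qstar) := by
  obtain ⟨hγ0, hγ1⟩ := M.hγ
  have hQbar_one : Qbar 1 = Qpi 0 := by simp [hQbarSucc 0, hβ0, hQbar0]
  have hb_one : (1 - M.γ) * supNormQ (Qstar - Qbar 1)
      ≤ supNormQ (Qstar - bellmanPol M (pol 0) Qstar) :=
    hQbar_one ▸ one_sub_mul_supNormQ_sub_fixedPoint_le M (hpol 0) (hQpi 0) hQstar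
  intro k hk
  obtain ⟨n, rfl⟩ := Nat.exists_eq_add_of_le' hk
  have hP : 0 ≤ ∏ i ∈ Icc 1 n, (1 - (1 - M.γ) * β i) :=
    prod_nonneg fun i hi => one_sub_one_sub_discount_mul_nonneg M
      (hβ i (mem_Icc.mp hi).1).1.le (hβ i (mem_Icc.mp hi).1).2
  calc supNormQ (Qstar - bellmanPol M (pol (n + 1)) Qstar)
      ≤ 2 * M.γ * supNormQ (Qstar - Qbar (n + 1)) :=
        supNormQ_sub_bellmanPol_le M (hpol _) hQstar (hgreedy n)
    _ ≤ 2 * M.γ * ((∏ i ∈ Icc 1 n, (1 - (1 - M.γ) * β i)) * supNormQ (Qstar - Qbar 1)) := by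
        gcongr
        exact dpi_supNormQ_sub_Qbar_le M hβ hpol hQpi hQbar_one hQbarSucc hgreedy hQstar n
    _ ≤ 2 * M.γ * ((∏ i ∈ Icc 1 n, (1 - (1 - M.γ) * β i))
          * (supNormQ (Qstar - bellmanPol M (pol 0) Qstar) / (1 - M.γ))) := by
        gcongr
        rw [le_div_iff₀ (by linarith)]
        linarith
    _ = _ := by simp only [Nat.add_sub_cancel]; ring
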